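/- Let T > 0, a > 0 and let k⁰⁰, k¹¹, k²² > 0 be kernel constants. Let σ : [0,T] → ℝ be right-continuous with left limits, with at most finitely many discontinuity points, and satisfying σ̲ ≤ σ(u) ≤ σ̄ for all u, for constants 0 < σ̲ ≤ σ̄. For each integer B ≥ 1, with Δ_B = T/B, 𝖳_i = i·T/B and ρ_i = ρ_{𝖳_{i−1},𝖳_i}, define AVAR_B^{(RK)} = B^{1/2} · Σ_{i=1}^B a·(Δ_B·∫_{𝖳_{i−1}}^{𝖳_i} σ(u)⁴ du)^{3/4}·g(ρ_i). Then AVAR_B^{(RK)} → (g(1)/8) · (8·a·T^{1/2}·∫₀^T σ(u)³ du) as B → ∞; that is, the optimally tuned local realized-kernel asymptotic variance converges to g(1)/8 times the efficiency bound AVAR^{(Bound)}_{[0,T]} = 8·a·T^{1/2}·∫₀^T σ(u)³ du. -/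

import Mathlib

open MeasureTheory Filter

/-- Heteroskedasticity measure `ρ_{r,s}`. -/
noncomputable def rhoM (σ : ℝ → ℝ) (r s : ℝ) : ℝ :=
  (∫ u in r..s, σ u ^ 2) /
    ((s - r) ^ ((1 : ℝ) / 2) * (∫ u in r..s, σ u ^ 4) ^ ((1 : ℝ) / 2))

/-- `p(ρ) = (1 + (1 + 3d/ρ²)^{1/2})^{1/2}` with `d = k⁰⁰k²²/(k¹¹)²`. -/
noncomputable def pKer (k00 k11 k22 ρ : ℝ) : ℝ :=
  (1 + (1 + 3 * (k00 * k22 / k11 ^ 2) / ρ ^ 2) ^ ((1 : ℝ) / 2)) ^ ((1 : ℝ) / 2)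

/-- `g(ρ) = (16/3)(ρ k⁰⁰ k¹¹)^{1/2}(1/p(ρ) + p(ρ))`. -/
noncomputable def gKer (k00 k11 k22 ρ : ℝ) : ℝ :=
  (16 / 3) * (ρ * k00 * k11) ^ ((1 : ℝ) / 2) *
    (1 / pKer k00 k11 k22 ρ + pKer k00 k11 k22 ρ)

noncomputable def Hfun (a T k00 k11 k22 x y : ℝ) : ℝ :=
  a * T ^ ((1:ℝ)/2) * y ^ ((3:ℝ)/4) * gKer k00 k11 k22 (x / y ^ ((1:ℝ)/2))

noncomputable def bAvg (σ : ℝ → ℝ) (m : ℕ) (T : ℝ) (B : ℕ) (z : ℤ) : ℝ :=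
  (∫ u in ((z:ℝ) * T / B)..(((z:ℝ) + 1) * T / B), σ u ^ m) / (T / B)

noncomputable def stepF (σ : ℝ → ℝ) (a T k00 k11 k22 : ℝ) (B : ℕ) (u : ℝ) : ℝ :=
  Hfun a T k00 k11 k22 (bAvg σ 2 T B ⌊u * B / T⌋) (bAvg σ 4 T B ⌊u * B / T⌋)

lemma pKer_pos {k00 k11 k22 ρ : ℝ} (h00 : 0 < k00) (h11 : 0 < k11) (h22 : 0 < k22)
    (hρ : 0 < ρ) : 0 < pKer k00 k11 k22 ρ := by
  have h1 : (0:ℝ) < 1 + 3 * (k00 * k22 / k11 ^ 2) / ρ ^ 2 := by positivity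
  have h2 : (0:ℝ) < (1 + 3 * (k00 * k22 / k11 ^ 2) / ρ ^ 2) ^ ((1:ℝ)/2) :=
    Real.rpow_pos_of_pos h1 _
  exact Real.rpow_pos_of_pos (by linarith) _

lemma pKer_contAt {k00 k11 k22 ρ : ℝ} (hρ : 0 < ρ) :
    ContinuousAt (pKer k00 k11 k22) ρ := by
  have h1 : ContinuousAt (fun x : ℝ => 1 + 3 * (k00 * k22 / k11 ^ 2) / x ^ 2) ρ :=
    continuousAt_const.add (continuousAt_const.div ((continuous_pow 2).continuousAt)
      (by positivity))
  have h2 : ContinuousAt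
      (fun x : ℝ => (1 + 3 * (k00 * k22 / k11 ^ 2) / x ^ 2) ^ ((1:ℝ)/2)) ρ :=
    h1.rpow_const (Or.inr (by norm_num))
  have h3 : ContinuousAt
      (fun x : ℝ => (1 + (1 + 3 * (k00 * k22 / k11 ^ 2) / x ^ 2) ^ ((1:ℝ)/2)) ^ ((1:ℝ)/2)) ρ :=
    (continuousAt_const.add h2).rpow_const (Or.inr (by norm_num))
  exact h3

lemma gKer_contAt {k00 k11 k22 ρ : ℝ} (h00 : 0 < k00) (h11 : 0 < k11) (h22 : 0 < k22)
    (hρ : 0 < ρ) : ContinuousAt (gKer k00 k11 k22) ρ := by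
  have hp := pKer_contAt (k00 := k00) (k11 := k11) (k22 := k22) hρ
  have hpne : pKer k00 k11 k22 ρ ≠ 0 := (pKer_pos h00 h11 h22 hρ).ne'
  have h1 : ContinuousAt (fun x : ℝ => (x * k00 * k11) ^ ((1:ℝ)/2)) ρ :=
    ((continuousAt_id.mul continuousAt_const).mul continuousAt_const).rpow_const
      (Or.inr (by norm_num))
  exact (continuousAt_const.mul h1).mul ((continuousAt_const.div hp hpne).add hp)

lemma Hfun_contAt {a T k00 k11 k22 : ℝ} (h00 : 0 < k00) (h11 : 0 < k11) (h22 : 0 < k22)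
    {p : ℝ × ℝ} (hx : 0 < p.1) (hy : 0 < p.2) :
    ContinuousAt (fun q : ℝ × ℝ => Hfun a T k00 k11 k22 q.1 q.2) p := by
  have hy2 : (0:ℝ) < p.2 ^ ((1:ℝ)/2) := Real.rpow_pos_of_pos hy _
  have hρ : 0 < p.1 / p.2 ^ ((1:ℝ)/2) := div_pos hx hy2
  have hrf : ContinuousAt (fun q : ℝ × ℝ => q.1 / q.2 ^ ((1:ℝ)/2)) p :=
    continuousAt_fst.div (continuousAt_snd.rpow_const (Or.inr (by norm_num))) hy2.ne'
  have hg : ContinuousAt (fun q : ℝ × ℝ => gKer k00 k11 k22 (q.1 / q.2 ^ ((1:ℝ)/2))) p :=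
    ContinuousAt.comp (x := p) (g := gKer k00 k11 k22)
      (f := fun q : ℝ × ℝ => q.1 / q.2 ^ ((1:ℝ)/2)) (gKer_contAt h00 h11 h22 hρ) hrf
  exact ((continuousAt_const.mul (continuousAt_snd.rpow_const (Or.inr (by norm_num)))).mul hg)

lemma block_facts {T u : ℝ} (hT : 0 < T) {B : ℕ} (hB : 1 ≤ B) (hu : u ∈ Set.Ico (0:ℝ) T) :
    0 ≤ ((⌊u * B / T⌋ : ℝ) * T / B) ∧
    (((⌊u * B / T⌋ : ℝ) * T / B ≤ u ∧ u < ((⌊u * B / T⌋ : ℝ) + 1) * T / B) ∧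
    ((⌊u * B / T⌋ : ℝ) + 1) * T / B ≤ T) := by
  have hB0 : (0:ℝ) < B := by exact_mod_cast hB
  have hΔ : (0:ℝ) < T / B := div_pos hT hB0
  obtain ⟨hu0, huT⟩ := hu
  have hx0 : 0 ≤ u * B / T := by positivity
  have hfl0 : (0:ℝ) ≤ (⌊u * B / T⌋ : ℝ) := by exact_mod_cast Int.floor_nonneg.2 hx0
  have h1 : ((⌊u * B / T⌋ : ℝ)) ≤ u * B / T := Int.floor_le _
  have h2 : u * B / T < (⌊u * B / T⌋ : ℝ) + 1 := Int.lt_floor_add_one _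
  have key : (u * B / T) * (T / B) = u := by field_simp
  refine ⟨div_nonneg (mul_nonneg hfl0 hT.le) hB0.le, ⟨⟨?_, ?_⟩, ?_⟩⟩
  · calc (⌊u * B / T⌋ : ℝ) * T / B = (⌊u * B / T⌋ : ℝ) * (T / B) := by ring
      _ ≤ (u * B / T) * (T / B) := mul_le_mul_of_nonneg_right h1 hΔ.le
      _ = u := key
  · calc u = (u * B / T) * (T / B) := key.symm
      _ < ((⌊u * B / T⌋ : ℝ) + 1) * (T / B) := mul_lt_mul_of_pos_right h2 hΔ
      _ = ((⌊u * B / T⌋ : ℝ) + 1) * T / B := by ring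
  · have hlt : u * B / T < (B : ℝ) := by
      rw [div_lt_iff₀ hT]
      calc u * B < T * B := mul_lt_mul_of_pos_right huT hB0
        _ = (B:ℝ) * T := by ring
    have hfl : (⌊u * B / T⌋ : ℤ) < (B : ℤ) := Int.floor_lt.2 (by exact_mod_cast hlt)
    have hfl' : (⌊u * B / T⌋ : ℝ) + 1 ≤ (B : ℝ) := by exact_mod_cast hfl
    calc ((⌊u * B / T⌋ : ℝ) + 1) * T / B ≤ (B:ℝ) * T / B := by gcongr
      _ = T := by field_simp

lemma floor_on_block {T v : ℝ} (hT : 0 < T) {B i : ℕ} (hB : 1 ≤ B)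
    (hv : v ∈ Set.Ioo ((i:ℝ) * T / B) (((i:ℝ) + 1) * T / B)) :
    ⌊v * B / T⌋ = (i : ℤ) := by
  have hB0 : (0:ℝ) < B := by exact_mod_cast hB
  rw [Int.floor_eq_iff]
  constructor
  · have h1 : (i:ℝ) * T < v * B := (div_lt_iff₀ hB0).mp hv.1
    push_cast
    rw [le_div_iff₀ hT]
    linarith
  · have h2 : v * B < ((i:ℝ) + 1) * T := (lt_div_iff₀ hB0).mp hv.2
    push_cast
    rw [div_lt_iff₀ hT]
    linarith

lemma avg_bounds {g : ℝ → ℝ} {lo hi T r s : ℝ} (h0r : 0 ≤ r) (hrs : r < s) (hsT : s ≤ T)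
    (hint : IntegrableOn g (Set.Icc 0 T))
    (hb : ∀ v ∈ Set.Icc (0:ℝ) T, lo ≤ g v ∧ g v ≤ hi) :
    lo ≤ (∫ v in r..s, g v) / (s - r) ∧ (∫ v in r..s, g v) / (s - r) ≤ hi := by
  have hsub : Set.Icc r s ⊆ Set.Icc 0 T := Set.Icc_subset_Icc h0r hsT
  have hii : IntervalIntegrable g volume r s := by
    rw [intervalIntegrable_iff, Set.uIoc_of_le hrs.le]
    exact hint.mono_set (Set.Ioc_subset_Icc_self.trans hsub)
  have hlo := intervalIntegral.integral_mono_on (μ := volume) hrs.le intervalIntegrable_const hii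
    (fun x hx => (hb x (hsub hx)).1)
  rw [intervalIntegral.integral_const, smul_eq_mul] at hlo
  have hhi := intervalIntegral.integral_mono_on (μ := volume) hrs.le hii intervalIntegrable_const
    (fun x hx => (hb x (hsub hx)).2)
  rw [intervalIntegral.integral_const, smul_eq_mul] at hhi
  have hsr : 0 < s - r := sub_pos.2 hrs
  constructor
  · rw [le_div_iff₀ hsr]; linarith
  · rw [div_le_iff₀ hsr]; linarith

lemma bAvg_tendsto {g : ℝ → ℝ} {T u : ℝ} (hT : 0 < T) (hu : u ∈ Set.Ico (0:ℝ) T)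
    (hint : IntegrableOn g (Set.Icc 0 T))
    (hcont : ContinuousWithinAt g (Set.Icc 0 T) u) :
    Tendsto (fun B : ℕ =>
        (∫ v in ((⌊u * B / T⌋:ℝ) * T / B)..(((⌊u * B / T⌋:ℝ) + 1) * T / B), g v) / (T / B))
      atTop (nhds (g u)) := by
  rw [Metric.tendsto_atTop]
  intro ε hε
  obtain ⟨δ, hδ, hδε⟩ := Metric.continuousWithinAt_iff.1 hcont (ε/2) (half_pos hε)
  obtain ⟨N0, hN0⟩ := exists_nat_gt (T / δ)
  refine ⟨max N0 1, fun B hB => ?_⟩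
  have hB1 : 1 ≤ B := le_trans (le_max_right _ _) hB
  have hB0 : (0:ℝ) < B := by exact_mod_cast hB1
  have hΔ : (0:ℝ) < T / B := div_pos hT hB0
  have hΔδ : T / B < δ := by
    rw [div_lt_iff₀ hB0]
    have hN : (T / δ) < (B:ℝ) :=
      lt_of_lt_of_le hN0 (by exact_mod_cast le_trans (le_max_left _ _) hB)
    calc T = (T / δ) * δ := by field_simp
      _ < (B:ℝ) * δ := mul_lt_mul_of_pos_right hN hδ
      _ = δ * B := mul_comm _ _
  obtain ⟨hr0, ⟨hru, hus⟩, hsT⟩ := block_facts hT hB1 hu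
  set r := (⌊u * B / T⌋:ℝ) * T / B with hrdef
  set s := ((⌊u * B / T⌋:ℝ) + 1) * T / B with hsdef
  have hsr : s - r = T / B := by rw [hrdef, hsdef]; ring
  have hrs : r < s := lt_of_le_of_lt hru hus
  have hIccsub : Set.Icc r s ⊆ Set.Icc 0 T := Set.Icc_subset_Icc hr0 hsT
  have hii : IntervalIntegrable g volume r s := by
    rw [intervalIntegrable_iff, Set.uIoc_of_le hrs.le]
    exact hint.mono_set (Set.Ioc_subset_Icc_self.trans hIccsub)
  have hbound : ∀ x ∈ Set.uIoc r s, ‖g x - g u‖ ≤ ε/2 := by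
    intro x hx
    rw [Set.uIoc_of_le hrs.le] at hx
    have hxI : x ∈ Set.Icc (0:ℝ) T := hIccsub (Set.Ioc_subset_Icc_self hx)
    have hdxu : dist x u < δ := by
      rw [Real.dist_eq]
      have h1 : x - u ≤ s - r := by have := hx.2; linarith
      have h2 : -(s - r) ≤ x - u := by have := hx.1; have := hus.le; linarith
      calc |x - u| ≤ s - r := abs_le.2 ⟨h2, h1⟩
        _ = T / B := hsr
        _ < δ := hΔδ
    have h3 := hδε hxI hdxu
    rw [Real.norm_eq_abs, ← Real.dist_eq]
    exact h3.le
  have hnorm := intervalIntegral.norm_integral_le_of_norm_le_const (f := fun x => g x - g u) hbound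
  have hint_sub : (∫ x in r..s, (g x - g u)) = (∫ x in r..s, g x) - (T / B) * g u := by
    rw [intervalIntegral.integral_sub hii intervalIntegrable_const,
      intervalIntegral.integral_const, hsr, smul_eq_mul]
  rw [Real.dist_eq]
  have key : (∫ v in r..s, g v) / (T / B) - g u = (∫ x in r..s, (g x - g u)) / (T / B) := by
    rw [hint_sub]; field_simp
  rw [key, abs_div, abs_of_pos hΔ, div_lt_iff₀ hΔ]
  have habs : |∫ x in r..s, (g x - g u)| ≤ ε/2 * (T / B) := by
    have h4 : |s - r| = T / B := by rw [hsr]; exact abs_of_pos hΔ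
    calc |∫ x in r..s, (g x - g u)| ≤ ε/2 * |s - r| := by
          rw [← Real.norm_eq_abs]; exact hnorm
      _ = ε/2 * (T / B) := by rw [h4]
  calc |∫ x in r..s, (g x - g u)| ≤ ε/2 * (T / B) := habs
    _ < ε * (T / B) := by nlinarith

lemma rho_eq {I2 I4 Δ : ℝ} (hΔ : 0 < Δ) (hI4 : 0 < I4) :
    I2 / (Δ ^ ((1:ℝ)/2) * I4 ^ ((1:ℝ)/2)) = (I2 / Δ) / ((I4 / Δ) ^ ((1:ℝ)/2)) := by
  have h1 : Δ ^ ((1:ℝ)/2) * Δ ^ ((1:ℝ)/2) = Δ := by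
    rw [← Real.rpow_add hΔ]; norm_num
  have h2 : (I4 / Δ) ^ ((1:ℝ)/2) = I4 ^ ((1:ℝ)/2) / Δ ^ ((1:ℝ)/2) :=
    Real.div_rpow hI4.le hΔ.le _
  have hΔ2 : (0:ℝ) < Δ ^ ((1:ℝ)/2) := Real.rpow_pos_of_pos hΔ _
  have hI42 : (0:ℝ) < I4 ^ ((1:ℝ)/2) := Real.rpow_pos_of_pos hI4 _
  rw [h2, div_div_eq_mul_div]
  set x := Δ ^ ((1:ℝ)/2) with hx
  set y := I4 ^ ((1:ℝ)/2) with hy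
  rw [← h1]
  field_simp

lemma prefactor_eq {a T Δ I4 G : ℝ} {B : ℕ} (hB : 1 ≤ B) (hΔ : 0 < Δ) (hI4 : 0 < I4)
    (hBΔ : (B:ℝ) * Δ = T) :
    (B:ℝ) ^ ((1:ℝ)/2) * (a * (Δ * I4) ^ ((3:ℝ)/4) * G) =
      Δ * (a * T ^ ((1:ℝ)/2) * (I4 / Δ) ^ ((3:ℝ)/4) * G) := by
  have hB0 : (0:ℝ) < B := by exact_mod_cast hB
  have h1 : (Δ * I4) ^ ((3:ℝ)/4) = Δ ^ ((3:ℝ)/4) * I4 ^ ((3:ℝ)/4) :=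
    Real.mul_rpow hΔ.le hI4.le
  have h2 : (I4 / Δ) ^ ((3:ℝ)/4) = I4 ^ ((3:ℝ)/4) / Δ ^ ((3:ℝ)/4) :=
    Real.div_rpow hI4.le hΔ.le _
  have h3 : T ^ ((1:ℝ)/2) = (B:ℝ) ^ ((1:ℝ)/2) * Δ ^ ((1:ℝ)/2) := by
    rw [← hBΔ]; exact Real.mul_rpow hB0.le hΔ.le
  have h4 : Δ ^ ((3:ℝ)/4) * Δ ^ ((3:ℝ)/4) = Δ * Δ ^ ((1:ℝ)/2) := by
    rw [← Real.rpow_add hΔ]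
    nth_rewrite 2 [show Δ = Δ ^ (1:ℝ) from (Real.rpow_one Δ).symm]
    rw [← Real.rpow_add hΔ]
    norm_num
  have hΔ34 : (0:ℝ) < Δ ^ ((3:ℝ)/4) := Real.rpow_pos_of_pos hΔ _
  have hΔ12 : (0:ℝ) < Δ ^ ((1:ℝ)/2) := Real.rpow_pos_of_pos hΔ _
  rw [h1, h2, h3]
  field_simp
  linear_combination (a * G) * h4

/-- Convergence of the local RK asymptotic variance to `g(1)/8` times the
efficiency bound, for a càdlàg volatility path bounded away from `0` with at
most finitely many discontinuities. -/
theorem stmt8 (T a σlo σhi k00 k11 k22 : ℝ) (hT : 0 < T) (ha : 0 < a)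
    (h00 : 0 < k00) (h11 : 0 < k11) (h22 : 0 < k22)
    (hσlo : 0 < σlo) (hσ : σlo ≤ σhi) (σ : ℝ → ℝ)
    (hrc : ∀ u ∈ Set.Ico (0 : ℝ) T, ContinuousWithinAt σ (Set.Ici u) u)
    (hll : ∀ u ∈ Set.Ioc (0 : ℝ) T,
      ∃ L : ℝ, Tendsto σ (nhdsWithin u (Set.Iio u)) (nhds L))
    (hfin : {u ∈ Set.Icc (0 : ℝ) T |
      ¬ ContinuousWithinAt σ (Set.Icc (0 : ℝ) T) u}.Finite)
    (hbd : ∀ u ∈ Set.Icc (0 : ℝ) T, σlo ≤ σ u ∧ σ u ≤ σhi) :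
    Tendsto (fun B : ℕ =>
        (B : ℝ) ^ ((1 : ℝ) / 2) * ∑ i ∈ Finset.range B,
          a * ((T / B) *
              ∫ u in ((i : ℝ) * T / B)..(((i : ℝ) + 1) * T / B), σ u ^ 4) ^ ((3 : ℝ) / 4) *
            gKer k00 k11 k22 (rhoM σ ((i : ℝ) * T / B) (((i : ℝ) + 1) * T / B)))
      atTop
      (nhds (gKer k00 k11 k22 1 / 8 *
        (8 * a * T ^ ((1 : ℝ) / 2) * ∫ u in (0:ℝ)..T, σ u ^ 3))) := by
  have hσpos : ∀ v ∈ Set.Icc (0:ℝ) T, 0 < σ v := fun v hv => lt_of_lt_of_le hσlo (hbd v hv).1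
  set F := {u ∈ Set.Icc (0 : ℝ) T | ¬ ContinuousWithinAt σ (Set.Icc (0 : ℝ) T) u} with hFdef
  have hFnull : volume F = 0 := hfin.measure_zero _
  have hco : ContinuousOn σ (Set.Icc 0 T \ F) := by
    intro u hu
    have h1 : ContinuousWithinAt σ (Set.Icc 0 T) u := by
      by_contra h
      exact hu.2 ⟨hu.1, h⟩
    exact h1.mono Set.diff_subset
  have hmeas : AEMeasurable σ (volume.restrict (Set.Icc 0 T)) := by
    have h1 := hco.aemeasurable (μ := volume) (measurableSet_Icc.diff hfin.measurableSet)
    have h2 : volume.restrict (Set.Icc (0:ℝ) T \ F) = volume.restrict (Set.Icc (0:ℝ) T) :=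
      Measure.restrict_congr_set (MeasureTheory.diff_ae_eq_self.2
        (measure_mono_null Set.inter_subset_right hFnull))
    rwa [h2] at h1
  have hint : ∀ m : ℕ, IntegrableOn (fun v => σ v ^ m) (Set.Icc 0 T) := by
    intro m
    refine ⟨(hmeas.pow_const m).aestronglyMeasurable, ?_⟩
    apply HasFiniteIntegral.of_bounded (C := σhi ^ m)
    filter_upwards [ae_restrict_mem measurableSet_Icc] with v hv
    rw [Real.norm_eq_abs, abs_of_nonneg (pow_nonneg (hσpos v hv).le m)]
    exact pow_le_pow_left₀ (hσpos v hv).le (hbd v hv).2 m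
  -- compact uniform bound
  have hKc : IsCompact (Set.Icc (σlo^2) (σhi^2) ×ˢ Set.Icc (σlo^4) (σhi^4)) :=
    isCompact_Icc.prod isCompact_Icc
  have hKne : (Set.Icc (σlo^2) (σhi^2) ×ˢ Set.Icc (σlo^4) (σhi^4)).Nonempty :=
    ⟨(σlo^2, σlo^4), ⟨⟨le_refl _, pow_le_pow_left₀ hσlo.le hσ 2⟩,
      ⟨le_refl _, pow_le_pow_left₀ hσlo.le hσ 4⟩⟩⟩
  have hHco : ContinuousOn (fun p : ℝ × ℝ => ‖Hfun a T k00 k11 k22 p.1 p.2‖)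
      (Set.Icc (σlo^2) (σhi^2) ×ˢ Set.Icc (σlo^4) (σhi^4)) := by
    intro p hp
    exact ((Hfun_contAt h00 h11 h22 (lt_of_lt_of_le (by positivity) hp.1.1)
      (lt_of_lt_of_le (by positivity) hp.2.1)).norm).continuousWithinAt
  obtain ⟨p0, hp0K, hp0⟩ := hKc.exists_isMaxOn hKne hHco
  set C := ‖Hfun a T k00 k11 k22 p0.1 p0.2‖ with hCdef
  have hC0 : 0 ≤ C := norm_nonneg _
  -- measurability of the step functions
  have hstepmeas : ∀ B : ℕ, Measurable (stepF σ a T k00 k11 k22 B) := by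
    intro B
    have h1 : Measurable fun u : ℝ => ⌊u * B / T⌋ :=
      ((measurable_id.mul_const ((B:ℕ):ℝ)).div_const T).floor
    exact (measurable_from_top
      (f := fun z : ℤ => Hfun a T k00 k11 k22 (bAvg σ 2 T B z) (bAvg σ 4 T B z))).comp h1
  -- a.e. facts on (0,T]
  have haeT : ∀ᵐ u ∂(volume.restrict (Set.Ioc (0:ℝ) T)),
      u ∈ Set.Ioo (0:ℝ) T ∧ ContinuousWithinAt σ (Set.Icc (0:ℝ) T) u := by
    have h2 : ∀ᵐ u : ℝ ∂volume, u ∉ F ∪ {T} :=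
      measure_eq_zero_iff_ae_notMem.1 (measure_union_null hFnull Real.volume_singleton)
    filter_upwards [ae_restrict_mem measurableSet_Ioc, ae_restrict_of_ae h2] with u h1 h2'
    have huT : u ≠ T := fun he => h2' (Or.inr (by simp [he]))
    have huI : u ∈ Set.Icc (0:ℝ) T := ⟨h1.1.le, h1.2⟩
    refine ⟨⟨h1.1, lt_of_le_of_ne h1.2 huT⟩, ?_⟩
    by_contra hc
    exact h2' (Or.inl ⟨huI, hc⟩)
  -- pointwise a.e. limit
  have hlim : ∀ᵐ u ∂(volume.restrict (Set.Ioc (0:ℝ) T)),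
      Tendsto (fun B => stepF σ a T k00 k11 k22 B u) atTop
        (nhds (a * T ^ ((1:ℝ)/2) * gKer k00 k11 k22 1 * σ u ^ 3)) := by
    filter_upwards [haeT] with u hu
    obtain ⟨huo, hcu⟩ := hu
    have huI : u ∈ Set.Ico (0:ℝ) T := ⟨huo.1.le, huo.2⟩
    have hσu : 0 < σ u := hσpos u ⟨huo.1.le, huo.2.le⟩
    have t2 : Tendsto (fun B : ℕ => bAvg σ 2 T B ⌊u * B / T⌋) atTop (nhds (σ u ^ 2)) :=
      bAvg_tendsto hT huI (hint 2) (hcu.pow 2)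
    have t4 : Tendsto (fun B : ℕ => bAvg σ 4 T B ⌊u * B / T⌋) atTop (nhds (σ u ^ 4)) :=
      bAvg_tendsto hT huI (hint 4) (hcu.pow 4)
    have hcH : ContinuousAt (fun q : ℝ × ℝ => Hfun a T k00 k11 k22 q.1 q.2) (σ u ^ 2, σ u ^ 4) :=
      Hfun_contAt h00 h11 h22 (by positivity) (by positivity)
    have hcomp := hcH.tendsto.comp (t2.prodMk_nhds t4)
    have hval : Hfun a T k00 k11 k22 (σ u ^ 2) (σ u ^ 4) =
        a * T ^ ((1:ℝ)/2) * gKer k00 k11 k22 1 * σ u ^ 3 := by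
      unfold Hfun
      have e1 : ((σ u ^ 4 : ℝ)) ^ ((1:ℝ)/2) = σ u ^ 2 := by
        rw [← Real.rpow_natCast (σ u) 4, ← Real.rpow_mul hσu.le,
          show ((4:ℕ):ℝ) * ((1:ℝ)/2) = ((2:ℕ):ℝ) by norm_num, Real.rpow_natCast]
      have e2 : ((σ u ^ 4 : ℝ)) ^ ((3:ℝ)/4) = σ u ^ 3 := by
        rw [← Real.rpow_natCast (σ u) 4, ← Real.rpow_mul hσu.le,
          show ((4:ℕ):ℝ) * ((3:ℝ)/4) = ((3:ℕ):ℝ) by norm_num, Real.rpow_natCast]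
      rw [e1, e2, div_self (by positivity : (σ u ^ 2 : ℝ) ≠ 0)]
      ring
    rw [← hval]
    exact hcomp
  -- uniform bound
  have hbound : ∀ B : ℕ, ∀ᵐ u ∂(volume.restrict (Set.Ioc (0:ℝ) T)),
      ‖stepF σ a T k00 k11 k22 B u‖ ≤ C := by
    intro B
    rcases Nat.eq_zero_or_pos B with hB | hB
    · subst hB
      refine Filter.Eventually.of_forall (fun u => ?_)
      have h0 : stepF σ a T k00 k11 k22 0 u = 0 := by
        simp [stepF, bAvg, Hfun, Real.zero_rpow (by norm_num : ((3:ℝ)/4) ≠ 0)]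
      rw [h0, norm_zero]; exact hC0
    · filter_upwards [haeT] with u hu
      obtain ⟨huo, _⟩ := hu
      have huI : u ∈ Set.Ico (0:ℝ) T := ⟨huo.1.le, huo.2⟩
      obtain ⟨hr0, ⟨hru, hus⟩, hsT⟩ := block_facts hT hB huI
      have hrs : (⌊u * B / T⌋:ℝ) * T / B < ((⌊u * B / T⌋:ℝ) + 1) * T / B :=
        lt_of_le_of_lt hru hus
      have hb2 := avg_bounds (lo := σlo^2) (hi := σhi^2) hr0 hrs hsT (hint 2)
        (fun v hv => ⟨pow_le_pow_left₀ hσlo.le (hbd v hv).1 2,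
          pow_le_pow_left₀ (hσpos v hv).le (hbd v hv).2 2⟩)
      have hb4 := avg_bounds (lo := σlo^4) (hi := σhi^4) hr0 hrs hsT (hint 4)
        (fun v hv => ⟨pow_le_pow_left₀ hσlo.le (hbd v hv).1 4,
          pow_le_pow_left₀ (hσpos v hv).le (hbd v hv).2 4⟩)
      have hsr : ((⌊u * B / T⌋:ℝ) + 1) * T / B - (⌊u * B / T⌋:ℝ) * T / B = T / B := by ring
      rw [hsr] at hb2 hb4
      have hmem : ((bAvg σ 2 T B ⌊u * B / T⌋), (bAvg σ 4 T B ⌊u * B / T⌋)) ∈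
          Set.Icc (σlo^2) (σhi^2) ×ˢ Set.Icc (σlo^4) (σhi^4) :=
        ⟨⟨hb2.1, hb2.2⟩, ⟨hb4.1, hb4.2⟩⟩
      exact hp0 hmem
  -- dominated convergence
  have hDCT := MeasureTheory.tendsto_integral_of_dominated_convergence
    (μ := volume.restrict (Set.Ioc (0:ℝ) T))
    (F := fun B u => stepF σ a T k00 k11 k22 B u)
    (f := fun u => a * T ^ ((1:ℝ)/2) * gKer k00 k11 k22 1 * σ u ^ 3)
    (bound := fun _ => C)
    (fun B => (hstepmeas B).aestronglyMeasurable)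
    (integrable_const C) hbound hlim
  have hval2 : (∫ u in Set.Ioc (0:ℝ) T, (a * T ^ ((1:ℝ)/2) * gKer k00 k11 k22 1 * σ u ^ 3)) =
      gKer k00 k11 k22 1 / 8 * (8 * a * T ^ ((1 : ℝ) / 2) * ∫ u in (0:ℝ)..T, σ u ^ 3) := by
    rw [← intervalIntegral.integral_of_le hT.le, intervalIntegral.integral_const_mul]
    ring
  have hDCT' : Tendsto (fun B : ℕ => ∫ u in Set.Ioc (0:ℝ) T, stepF σ a T k00 k11 k22 B u) atTop
      (nhds (gKer k00 k11 k22 1 / 8 *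
        (8 * a * T ^ ((1 : ℝ) / 2) * ∫ u in (0:ℝ)..T, σ u ^ 3))) := by
    rw [← hval2]
    exact hDCT
  refine Tendsto.congr' ?_ hDCT'
  filter_upwards [eventually_ge_atTop 1] with B hB
  have hB0 : (0:ℝ) < B := by exact_mod_cast hB
  have hΔ : (0:ℝ) < T / B := div_pos hT hB0
  -- per-block identity and integrability
  have hkey : ∀ i : ℕ, i < B →
      IntervalIntegrable (stepF σ a T k00 k11 k22 B) volume
        ((i:ℝ) * T / B) (((i:ℝ) + 1) * T / B) ∧
      (∫ u in ((i:ℝ) * T / B)..(((i:ℝ) + 1) * T / B), stepF σ a T k00 k11 k22 B u) =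
        (B : ℝ) ^ ((1 : ℝ) / 2) * (a * ((T / B) *
            ∫ u in ((i : ℝ) * T / B)..(((i : ℝ) + 1) * T / B), σ u ^ 4) ^ ((3 : ℝ) / 4) *
          gKer k00 k11 k22 (rhoM σ ((i : ℝ) * T / B) (((i : ℝ) + 1) * T / B))) := by
    intro i hiB
    have hr0 : (0:ℝ) ≤ (i:ℝ) * T / B := by positivity
    have hsr' : ((i:ℝ) + 1) * T / B - (i:ℝ) * T / B = T / B := by ring
    have hrs : (i:ℝ) * T / B < ((i:ℝ) + 1) * T / B := by linarith
    have hsT : ((i:ℝ) + 1) * T / B ≤ T := by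
      have h1 : (i:ℝ) + 1 ≤ B := by exact_mod_cast hiB
      calc ((i:ℝ) + 1) * T / B ≤ (B:ℝ) * T / B := by gcongr
        _ = T := by field_simp
    have haec : ∀ᵐ v ∂volume, v ∈ Set.Ioc ((i:ℝ) * T / B) (((i:ℝ) + 1) * T / B) →
        stepF σ a T k00 k11 k22 B v =
          Hfun a T k00 k11 k22 (bAvg σ 2 T B (i:ℤ)) (bAvg σ 4 T B (i:ℤ)) := by
      rw [ae_iff]
      refine measure_mono_null (fun x hx => ?_)
        (Real.volume_singleton (a := ((i:ℝ) + 1) * T / B))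
      simp only [Set.mem_setOf_eq] at hx
      push_neg at hx
      obtain ⟨hx1, hx2⟩ := hx
      by_contra hxs
      simp only [Set.mem_singleton_iff] at hxs
      have hxo : x ∈ Set.Ioo ((i:ℝ) * T / B) (((i:ℝ) + 1) * T / B) :=
        ⟨hx1.1, lt_of_le_of_ne hx1.2 hxs⟩
      exact hx2 (by unfold stepF; rw [floor_on_block hT hB hxo])
    have haec' : ∀ᵐ v ∂volume, v ∈ Set.uIoc ((i:ℝ) * T / B) (((i:ℝ) + 1) * T / B) →
        stepF σ a T k00 k11 k22 B v =
          Hfun a T k00 k11 k22 (bAvg σ 2 T B (i:ℤ)) (bAvg σ 4 T B (i:ℤ)) := by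
      rw [Set.uIoc_of_le hrs.le]; exact haec
    constructor
    · rw [intervalIntegrable_iff, Set.uIoc_of_le hrs.le]
      have hconst : IntegrableOn
          (fun _ : ℝ => Hfun a T k00 k11 k22 (bAvg σ 2 T B (i:ℤ)) (bAvg σ 4 T B (i:ℤ)))
          (Set.Ioc ((i:ℝ) * T / B) (((i:ℝ) + 1) * T / B)) volume :=
        integrableOn_const measure_Ioc_lt_top.ne
      exact hconst.congr (Filter.EventuallyEq.symm ((ae_restrict_iff' measurableSet_Ioc).2 haec))
    · have hIconst : (∫ u in ((i:ℝ) * T / B)..(((i:ℝ) + 1) * T / B),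
          stepF σ a T k00 k11 k22 B u) =
          (T / B) * Hfun a T k00 k11 k22 (bAvg σ 2 T B (i:ℤ)) (bAvg σ 4 T B (i:ℤ)) := by
        rw [intervalIntegral.integral_congr_ae haec', intervalIntegral.integral_const,
          smul_eq_mul, hsr']
      have hb4 := avg_bounds (lo := σlo^4) (hi := σhi^4) hr0 hrs hsT (hint 4)
        (fun v hv => ⟨pow_le_pow_left₀ hσlo.le (hbd v hv).1 4,
          pow_le_pow_left₀ (hσpos v hv).le (hbd v hv).2 4⟩)
      rw [hsr'] at hb4
      have hI4pos : 0 < ∫ u in ((i:ℝ) * T / B)..(((i:ℝ) + 1) * T / B), σ u ^ 4 := by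
        have h6 := hb4.1
        rw [le_div_iff₀ hΔ] at h6
        nlinarith [pow_pos hσlo 4]
      have hc2 : bAvg σ 2 T B (i:ℤ) =
          (∫ u in ((i:ℝ) * T / B)..(((i:ℝ) + 1) * T / B), σ u ^ 2) / (T / B) := by
        simp [bAvg]
      have hc4 : bAvg σ 4 T B (i:ℤ) =
          (∫ u in ((i:ℝ) * T / B)..(((i:ℝ) + 1) * T / B), σ u ^ 4) / (T / B) := by
        simp [bAvg]
      have hρeq : rhoM σ ((i:ℝ) * T / B) (((i:ℝ) + 1) * T / B) =
          bAvg σ 2 T B (i:ℤ) / (bAvg σ 4 T B (i:ℤ)) ^ ((1:ℝ)/2) := by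
        unfold rhoM
        rw [hsr', hc2, hc4]
        exact rho_eq hΔ hI4pos
      rw [hIconst, hρeq]
      have hpre := prefactor_eq (a := a) (T := T) (Δ := T / B)
        (I4 := ∫ u in ((i:ℝ) * T / B)..(((i:ℝ) + 1) * T / B), σ u ^ 4)
        (G := gKer k00 k11 k22
          (bAvg σ 2 T B (i:ℤ) / (bAvg σ 4 T B (i:ℤ)) ^ ((1:ℝ)/2)))
        hB hΔ hI4pos (by rw [mul_comm, div_mul_cancel₀ _ hB0.ne'])
      rw [← hc4] at hpre
      exact hpre.symm
  -- assemble the sum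
  have hsum := intervalIntegral.sum_integral_adjacent_intervals (μ := volume)
    (f := stepF σ a T k00 k11 k22 B) (a := fun i : ℕ => (i:ℝ) * T / B) (n := B)
    (by
      intro k hk
      have h1 := (hkey k hk).1
      have h2 : ((k:ℝ) + 1) * T / B = ((k+1 : ℕ):ℝ) * T / B := by push_cast; ring
      rw [h2] at h1
      exact h1)
  have hψ0 : ((0:ℕ):ℝ) * T / (B:ℝ) = 0 := by simp
  have hψB : ((B:ℕ):ℝ) * T / (B:ℝ) = T := by field_simp
  beta_reduce at hsum
  rw [hψ0, hψB] at hsum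
  calc (∫ u in Set.Ioc (0:ℝ) T, stepF σ a T k00 k11 k22 B u)
      = ∫ u in (0:ℝ)..T, stepF σ a T k00 k11 k22 B u :=
        (intervalIntegral.integral_of_le hT.le).symm
    _ = ∑ k ∈ Finset.range B,
        ∫ u in ((k:ℝ) * T / B)..(((k:ℝ) + 1) * T / B), stepF σ a T k00 k11 k22 B u := by
        rw [← hsum]
        refine Finset.sum_congr rfl (fun k hk => ?_)
        beta_reduce
        have h2 : ((k+1 : ℕ):ℝ) * T / B = ((k:ℝ) + 1) * T / B := by push_cast; ring
        rw [h2]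
    _ = ∑ k ∈ Finset.range B, (B : ℝ) ^ ((1 : ℝ) / 2) * (a * ((T / B) *
            ∫ u in ((k : ℝ) * T / B)..(((k : ℝ) + 1) * T / B), σ u ^ 4) ^ ((3 : ℝ) / 4) *
          gKer k00 k11 k22 (rhoM σ ((k : ℝ) * T / B) (((k : ℝ) + 1) * T / B))) :=
        Finset.sum_congr rfl (fun k hk => (hkey k (Finset.mem_range.1 hk)).2)
    _ = (B : ℝ) ^ ((1 : ℝ) / 2) * ∑ i ∈ Finset.range B,
          a * ((T / B) *
              ∫ u in ((i : ℝ) * T / B)..(((i : ℝ) + 1) * T / B), σ u ^ 4) ^ ((3 : ℝ) / 4) *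
            gKer k00 k11 k22 (rhoM σ ((i : ℝ) * T / B) (((i : ℝ) + 1) * T / B)) :=
        (Finset.mul_sum _ _ _).symm
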